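/- arXiv:2211.05690 — 7 statements merged into one kernel-verified Lean document; each statement's English description precedes it below -/
import Mathlib

section
/- Let G be a connected graph and let U = {u1, u2, u3} and W be vertex sets such that a vertex r_u mutually separates every pair in U (i.e., U is a star triplet with ancestor r_u) and a vertex r_w ≠ r_u mutually separates every pair in W. Then there exists a vertex u ∈ U and two distinct vertices w2, w3 ∈ W such that every path from u to w2 and every path from u to w3 contains both r_u and r_w. -/
variable {V : Type*}

/-- A vertex `v` separates `u` and `w`: every path from `u` to `w` contains `v`. -/
def Separates (G : SimpleGraph V) (v u w : V) : Prop :=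
  ∀ p : G.Walk u w, p.IsPath → v ∈ p.support

/-- `r` is the ancestor of the star triplet `{x, y, z}`: it separates every pair. -/
def IsStarAncestor (G : SimpleGraph V) (r x y z : V) : Prop :=
  Separates G r x y ∧ Separates G r x z ∧ Separates G r y z

private lemma sep_of_not_not {G : SimpleGraph V} {r s x y : V}
    (hx : ¬ Separates G r x s) (hy : ¬ Separates G r y s) : ¬ Separates G r x y := by
  classical
  simp only [Separates, not_forall] at hx hy
  obtain ⟨p, hp, hpr⟩ := hx
  obtain ⟨q, hq, hqr⟩ := hy
  intro hsep
  have hw : r ∉ (p.append q.reverse).support := by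
    rw [SimpleGraph.Walk.support_append]
    simp only [List.mem_append]
    push_neg
    refine ⟨hpr, fun h => hqr ?_⟩
    have := List.mem_of_mem_tail h
    rwa [SimpleGraph.Walk.support_reverse, List.mem_reverse] at this
  have hmem := hsep (p.append q.reverse).bypass ((p.append q.reverse).bypass_isPath)
  exact hw (SimpleGraph.Walk.support_bypass_subset _ hmem)

private lemma key_both {G : SimpleGraph V} (hG : G.Connected) {u w rᵤ r_w : V}
    (hr : rᵤ ≠ r_w) (h1 : Separates G rᵤ u r_w) (h2 : Separates G r_w w rᵤ) :
    ∀ p : G.Walk u w, p.IsPath → rᵤ ∈ p.support ∧ r_w ∈ p.support := by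
  classical
  have hrw : ∀ p : G.Walk u w, p.IsPath → r_w ∈ p.support := by
    intro p hp
    by_contra hpw
    obtain ⟨q0⟩ := hG.preconnected u r_w
    set q := q0.bypass with hqdef
    have hq : q.IsPath := q0.bypass_isPath
    have hru_q : rᵤ ∈ q.support := h1 q hq
    set t := q.takeUntil rᵤ hru_q with htdef
    have ht : t.IsPath := hq.takeUntil hru_q
    -- r_w is not in t.support
    have hrw_t : r_w ∉ t.support := by
      have hspec : t.append (q.dropUntil rᵤ hru_q) = q := q.take_spec hru_q
      have hnd : q.support.Nodup := hq.support_nodup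
      have hqs : q.support = t.support ++ (q.dropUntil rᵤ hru_q).support.tail := by
        rw [← SimpleGraph.Walk.support_append, hspec]
      rw [hqs] at hnd
      have hdisj := List.disjoint_of_nodup_append hnd
      have hmem : r_w ∈ (q.dropUntil rᵤ hru_q).support.tail := by
        have hend : r_w ∈ (q.dropUntil rᵤ hru_q).support :=
          SimpleGraph.Walk.end_mem_support _
        rw [SimpleGraph.Walk.support_eq_cons, List.mem_cons] at hend
        rcases hend with h | h
        · exact absurd h.symm hr
        · exact h
      intro hmt
      exact hdisj hmt hmem
    -- build a walk w → rᵤ avoiding r_w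
    have hc : r_w ∉ (p.reverse.append t).support := by
      rw [SimpleGraph.Walk.support_append]
      simp only [List.mem_append]
      push_neg
      constructor
      · rw [SimpleGraph.Walk.support_reverse, List.mem_reverse]; exact hpw
      · exact fun h => hrw_t (List.mem_of_mem_tail h)
    have hmem := h2 (p.reverse.append t).bypass ((p.reverse.append t).bypass_isPath)
    exact hc (SimpleGraph.Walk.support_bypass_subset _ hmem)
  intro p hp
  have hw := hrw p hp
  refine ⟨?_, hw⟩
  have hru : rᵤ ∈ (p.takeUntil r_w hw).support :=
    h1 (p.takeUntil r_w hw) (hp.takeUntil hw)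
  exact SimpleGraph.Walk.support_takeUntil_subset _ hw hru

/-- For two star triplets with distinct ancestors, some `u ∈ U` and two distinct
`w₂, w₃ ∈ W` are such that every path from `u` to `w₂` (resp. `w₃`) contains both
ancestors. -/
theorem exists_vertex_sep_by_both_ancestors (G : SimpleGraph V) (hG : G.Connected)
    (u₁ u₂ u₃ w₁ w₂ w₃ rᵤ r_w : V)
    (hU : u₁ ≠ u₂ ∧ u₁ ≠ u₃ ∧ u₂ ≠ u₃) (hW : w₁ ≠ w₂ ∧ w₁ ≠ w₃ ∧ w₂ ≠ w₃)
    (hr : rᵤ ≠ r_w)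
    (hanU : IsStarAncestor G rᵤ u₁ u₂ u₃) (hanW : IsStarAncestor G r_w w₁ w₂ w₃) :
    ∃ u ∈ ({u₁, u₂, u₃} : Set V), ∃ w ∈ ({w₁, w₂, w₃} : Set V),
      ∃ w' ∈ ({w₁, w₂, w₃} : Set V), w ≠ w' ∧
        (∀ p : G.Walk u w, p.IsPath → rᵤ ∈ p.support ∧ r_w ∈ p.support) ∧
        (∀ p : G.Walk u w', p.IsPath → rᵤ ∈ p.support ∧ r_w ∈ p.support) := by
  -- find u ∈ U with Separates G rᵤ u r_w
  have hu : ∃ u ∈ ({u₁, u₂, u₃} : Set V), Separates G rᵤ u r_w := by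
    by_cases h1 : Separates G rᵤ u₁ r_w
    · exact ⟨u₁, by simp, h1⟩
    · by_cases h2 : Separates G rᵤ u₂ r_w
      · exact ⟨u₂, by simp, h2⟩
      · exact absurd hanU.1 (sep_of_not_not h1 h2)
  -- find two distinct w, w' ∈ W with Separates G r_w · rᵤ
  have hw : ∃ w ∈ ({w₁, w₂, w₃} : Set V), ∃ w' ∈ ({w₁, w₂, w₃} : Set V), w ≠ w' ∧
      Separates G r_w w rᵤ ∧ Separates G r_w w' rᵤ := by
    by_cases h1 : Separates G r_w w₁ rᵤ
    · by_cases h2 : Separates G r_w w₂ rᵤ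
      · exact ⟨w₁, by simp, w₂, by simp, hW.1, h1, h2⟩
      · by_cases h3 : Separates G r_w w₃ rᵤ
        · exact ⟨w₁, by simp, w₃, by simp, hW.2.1, h1, h3⟩
        · exact absurd hanW.2.2 (sep_of_not_not h2 h3)
    · by_cases h2 : Separates G r_w w₂ rᵤ
      · by_cases h3 : Separates G r_w w₃ rᵤ
        · exact ⟨w₂, by simp, w₃, by simp, hW.2.2, h2, h3⟩
        · exact absurd hanW.2.1 (sep_of_not_not h1 h3)
      · exact absurd hanW.1 (sep_of_not_not h1 h2)
  obtain ⟨u, hum, hus⟩ := hu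
  obtain ⟨w, hwm, w', hwm', hne, hws, hws'⟩ := hw
  exact ⟨u, hum, w, hwm, w', hwm', hne,
    key_both hG hr hus hws, key_both hG hr hus hws'⟩
end

section
/- Let G be a connected graph, U a star triplet with ancestor r_u and W a star triplet with ancestor r_w, with r_u ≠ r_w. Then for each vertex u ∈ U there exist at least two distinct vertices w, w' ∈ W such that r_w separates u from w and r_w separates u from w'. -/
variable {V : Type*}

lemma sep_or {G : SimpleGraph V} {v a b : V} (h : Separates G v a b) (x : V) :
    Separates G v x a ∨ Separates G v x b := by
  classical
  by_contra hc
  push_neg at hc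
  obtain ⟨⟨p, hp, hpv⟩, ⟨q, hq, hqv⟩⟩ :
      (∃ p : G.Walk x a, p.IsPath ∧ v ∉ p.support) ∧
      (∃ q : G.Walk x b, q.IsPath ∧ v ∉ q.support) := by
    constructor
    · rcases not_forall.mp hc.1 with ⟨p, hp⟩
      exact ⟨p, by tauto⟩
    · rcases not_forall.mp hc.2 with ⟨q, hq⟩
      exact ⟨q, by tauto⟩
  set W : G.Walk a b := p.reverse.append q
  have hmem := h W.bypass W.bypass_isPath
  have := W.support_bypass_subset hmem
  rw [SimpleGraph.Walk.mem_support_append_iff, SimpleGraph.Walk.support_reverse,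
    List.mem_reverse] at this
  tauto

/-- For star triplets `U, W` with distinct ancestors, each `u ∈ U` is separated by
`r_w` from at least two distinct vertices of `W`. -/
theorem each_vertex_sep_from_two (G : SimpleGraph V) (hG : G.Connected)
    (u₁ u₂ u₃ w₁ w₂ w₃ rᵤ r_w : V)
    (hU : u₁ ≠ u₂ ∧ u₁ ≠ u₃ ∧ u₂ ≠ u₃) (hW : w₁ ≠ w₂ ∧ w₁ ≠ w₃ ∧ w₂ ≠ w₃)
    (hr : rᵤ ≠ r_w)
    (hanU : IsStarAncestor G rᵤ u₁ u₂ u₃) (hanW : IsStarAncestor G r_w w₁ w₂ w₃) :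
    ∀ u ∈ ({u₁, u₂, u₃} : Set V), ∃ w ∈ ({w₁, w₂, w₃} : Set V),
      ∃ w' ∈ ({w₁, w₂, w₃} : Set V), w ≠ w' ∧
        Separates G r_w u w ∧ Separates G r_w u w' := by
  intro u _
  obtain ⟨h12, h13, h23⟩ := hanW
  obtain ⟨n12, n13, n23⟩ := hW
  rcases sep_or h12 u with h1 | h2
  · rcases sep_or h23 u with h2 | h3
    · exact ⟨w₁, by simp, w₂, by simp, n12, h1, h2⟩
    · exact ⟨w₁, by simp, w₃, by simp, n13, h1, h3⟩
  · rcases sep_or h13 u with h1 | h3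
    · exact ⟨w₁, by simp, w₂, by simp, n12, h1, h2⟩
    · exact ⟨w₂, by simp, w₃, by simp, n23, h2, h3⟩
end

section
/- Let G be a connected graph and U a star triplet with ancestor r_u, W a star triplet with ancestor r_w, r_u ≠ r_w. Then there exists a vertex u ∈ U such that every path from u to r_w contains r_u. -/
variable {V : Type*}

lemma separates_of_walks {G : SimpleGraph V} {r a b c : V}
    (hsep : Separates G r a b)
    (pa : G.Walk a c) (pb : G.Walk b c)
    (ha : r ∉ pa.support) (hb : r ∉ pb.support) : False := by
  classical
  have hq := hsep ((pa.append pb.reverse).toPath) ((pa.append pb.reverse).toPath).2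
  have hsub := SimpleGraph.Walk.support_toPath_subset (pa.append pb.reverse)
  have := hsub hq
  rw [SimpleGraph.Walk.mem_support_append_iff] at this
  rcases this with h | h
  · exact ha h
  · exact hb (by simpa [SimpleGraph.Walk.support_reverse] using h)

/-- For star triplets `U, W` with distinct ancestors, some `u ∈ U` is such that every
path from `u` to `r_w` contains `rᵤ`. -/
theorem exists_vertex_sep_from_other_ancestor (G : SimpleGraph V) (hG : G.Connected)
    (u₁ u₂ u₃ w₁ w₂ w₃ rᵤ r_w : V)
    (hU : u₁ ≠ u₂ ∧ u₁ ≠ u₃ ∧ u₂ ≠ u₃) (hW : w₁ ≠ w₂ ∧ w₁ ≠ w₃ ∧ w₂ ≠ w₃)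
    (hr : rᵤ ≠ r_w)
    (hanU : IsStarAncestor G rᵤ u₁ u₂ u₃) (hanW : IsStarAncestor G r_w w₁ w₂ w₃) :
    ∃ u ∈ ({u₁, u₂, u₃} : Set V), Separates G rᵤ u r_w := by
  by_contra h
  push_neg at h
  have h1 := h u₁ (by simp)
  have h2 := h u₂ (by simp)
  simp only [Separates, not_forall] at h1 h2
  obtain ⟨p1, hp1, hr1⟩ := h1
  obtain ⟨p2, hp2, hr2⟩ := h2
  exact separates_of_walks hanU.1 p1 p2 hr1 hr2
end

section
/- Let G be a connected graph and T = {x, y, z} a star triplet with ancestor r, where r ∉ {x, y, z}. If some vertex v ∈ T separates the other two vertices of T, then v = r. Consequently, a member v of a star triplet T is a separator of the other two members of T if and only if v is the ancestor of T. -/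
variable {V : Type*}

/-- For a star triplet `{x, y, z}` with ancestor `r`: if `r ∉ {x, y, z}` and a member
`x` separates the other two, then `x = r`; consequently, a member of the triplet
separates the other two iff it is the ancestor. -/
theorem member_separator_iff_ancestor (G : SimpleGraph V) (hG : G.Connected)
    (x y z r : V) (hxy : x ≠ y) (hxz : x ≠ z) (hyz : y ≠ z)
    (han : IsStarAncestor G r x y z) :
    (r ∉ ({x, y, z} : Set V) → Separates G x y z → x = r) ∧
      (Separates G x y z ↔ x = r) := by
  have key : Separates G x y z → x = r := by
    intro hsep
    classical
    by_contra hxr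
    obtain ⟨w⟩ := hG y z
    have hpath : w.toPath.1.IsPath := w.toPath.2
    set p := w.toPath.1 with hp
    have hx : x ∈ p.support := hsep p hpath
    have h1 : (p.takeUntil x hx).IsPath := hpath.takeUntil hx
    have h2 : (p.dropUntil x hx).IsPath := hpath.dropUntil hx
    have hr1 : r ∈ (p.takeUntil x hx).support := by
      have := han.1 ((p.takeUntil x hx).reverse) h1.reverse
      simpa using this
    have hr2 : r ∈ (p.dropUntil x hx).support := han.2.1 _ h2
    have hnodup : p.support.Nodup := hpath.support_nodup
    rw [← p.take_spec hx, SimpleGraph.Walk.support_append] at hnodup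
    have hdisj := List.disjoint_of_nodup_append hnodup
    have htail : r ∈ (p.dropUntil x hx).support.tail := by
      rw [SimpleGraph.Walk.support_eq_cons (p.dropUntil x hx)] at hr2
      rcases List.mem_cons.mp hr2 with h | h
      · exact absurd h.symm hxr
      · exact h
    exact hdisj hr1 htail
  exact ⟨fun _ => key, ⟨key, fun h => h ▸ han.2.2⟩⟩
end

section
/- Let G be a connected graph, W = {w1, w2, w3} a star triplet with ancestor r_w, and x a vertex not in W with x ≠ r_w. If r_w does not separate x from w3, then r_w separates x from w1 and r_w separates x from w2. -/
variable {V : Type*}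

/-- If `r_w` does not separate `x ∉ W` from `w₃`, then `r_w` separates `x` from `w₁`
and from `w₂`. -/
theorem sep_from_other_two (G : SimpleGraph V) (hG : G.Connected)
    (w₁ w₂ w₃ r_w x : V)
    (hW : w₁ ≠ w₂ ∧ w₁ ≠ w₃ ∧ w₂ ≠ w₃)
    (han : IsStarAncestor G r_w w₁ w₂ w₃)
    (hx : x ∉ ({w₁, w₂, w₃} : Set V)) (hxr : x ≠ r_w)
    (h3 : ¬ Separates G r_w x w₃) :
    Separates G r_w x w₁ ∧ Separates G r_w x w₂ := by
  obtain ⟨q, hq, hrq⟩ : ∃ q : G.Walk x w₃, q.IsPath ∧ r_w ∉ q.support := by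
    simpa [Separates, not_forall] using h3
  have key : ∀ a : V, Separates G r_w a w₃ → Separates G r_w x a := by
    intro a ha p hp
    classical
    by_contra hrp
    have hwalk : r_w ∉ (p.reverse.append q).support := by
      rw [SimpleGraph.Walk.support_append]
      intro h
      rcases List.mem_append.1 h with h | h
      · exact hrp (by simpa using h)
      · exact hrq (List.mem_of_mem_tail h)
    have := ha (p.reverse.append q).bypass (p.reverse.append q).bypass_isPath
    exact hwalk (SimpleGraph.Walk.support_bypass_subset _ this)
  exact ⟨fun p hp => key w₁ han.2.1 p hp, fun p hp => key w₂ han.2.2 p hp⟩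
end

section
/- In a connected graph G with at least two cut vertices (or at least one cut vertex and at least four vertices), for every cut vertex c there exist two distinct vertex triplets U, W (with U ≠ W) such that c is the ancestor of both U and W. -/
variable {V : Type*}

/-- A cut vertex: its removal disconnects the graph. -/
def IsCutVertex (G : SimpleGraph V) (v : V) : Prop :=
  ¬ (G.induce ({v}ᶜ : Set V)).Connected

/-- `r` is the ancestor of the triplet `T`: it separates every pair of `T`. -/
def IsAncestor (G : SimpleGraph V) (r : V) (T : Finset V) : Prop :=
  ∀ x ∈ T, ∀ y ∈ T, x ≠ y → Separates G r x y

private lemma reach_of_walk {G : SimpleGraph V} {c : V} :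
    ∀ {u w : V} (p : G.Walk u w), c ∉ p.support →
    ∀ (hu : u ∈ ({c}ᶜ : Set V)) (hw : w ∈ ({c}ᶜ : Set V)),
    (G.induce ({c}ᶜ : Set V)).Reachable ⟨u, hu⟩ ⟨w, hw⟩ := by
  intro u w p
  induction p with
  | nil => intro _ hu hw; rfl
  | @cons a b d hab q ih =>
    intro hns hu hw
    simp only [SimpleGraph.Walk.support_cons, List.mem_cons] at hns
    push_neg at hns
    have hb : b ∈ ({c}ᶜ : Set V) := by
      simp only [Set.mem_compl_iff, Set.mem_singleton_iff]
      intro h; exact hns.2 (h ▸ q.start_mem_support)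
    have hadj : (G.induce ({c}ᶜ : Set V)).Adj ⟨a, hu⟩ ⟨b, hb⟩ := hab
    exact (hadj.reachable).trans (ih hns.2 hb hw)

private lemma sep_of_not_reach {G : SimpleGraph V} {c u w : V}
    (hu : u ∈ ({c}ᶜ : Set V)) (hw : w ∈ ({c}ᶜ : Set V))
    (hr : ¬ (G.induce ({c}ᶜ : Set V)).Reachable ⟨u, hu⟩ ⟨w, hw⟩) :
    Separates G c u w := by
  intro p _
  by_contra h
  exact hr (reach_of_walk p h hu hw)

private lemma ancestor_triple [DecidableEq V] {G : SimpleGraph V} {c u w : V}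
    (hu : u ∈ ({c}ᶜ : Set V)) (hw : w ∈ ({c}ᶜ : Set V))
    (hr : ¬ (G.induce ({c}ᶜ : Set V)).Reachable ⟨u, hu⟩ ⟨w, hw⟩) :
    IsAncestor G c ({u, w, c} : Finset V) := by
  intro x hx y hy hxy
  simp only [Finset.mem_insert, Finset.mem_singleton] at hx hy
  rcases hy with rfl | rfl | rfl
  · rcases hx with rfl | rfl | rfl
    · exact absurd rfl hxy
    · exact sep_of_not_reach hw hu (fun r => hr r.symm)
    · intro p _; exact p.start_mem_support
  · rcases hx with rfl | rfl | rfl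
    · exact sep_of_not_reach hu hw hr
    · exact absurd rfl hxy
    · intro p _; exact p.start_mem_support
  · intro p _; exact p.end_mem_support

/-- In a connected graph with at least four vertices, every cut vertex is the
ancestor of (at least) two distinct vertex triplets. -/
theorem cutVertex_has_two_triplets [Fintype V] (G : SimpleGraph V)
    (hG : G.Connected) (hcard : 4 ≤ Fintype.card V) (c : V) (hc : IsCutVertex G c) :
    ∃ U W : Finset V, U.card = 3 ∧ W.card = 3 ∧ U ≠ W ∧
      IsAncestor G c U ∧ IsAncestor G c W := by
  classical
  -- the induced graph on {c}ᶜ is nonempty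
  have hne : Nonempty ({c}ᶜ : Set V) := by
    have : ∃ x : V, x ≠ c := by
      by_contra h
      push_neg at h
      have : Fintype.card V ≤ 1 := Fintype.card_le_one_iff.2 (fun a b => (h a).trans (h b).symm)
      omega
    obtain ⟨x, hx⟩ := this
    exact ⟨⟨x, by simpa using hx⟩⟩
  rw [IsCutVertex, SimpleGraph.connected_iff] at hc
  have hpre : ¬ (G.induce ({c}ᶜ : Set V)).Preconnected := fun hp => hc ⟨hp, hne⟩
  unfold SimpleGraph.Preconnected at hpre
  push_neg at hpre
  obtain ⟨⟨u, hu⟩, ⟨w, hw⟩, hr⟩ := hpre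
  have huc : u ≠ c := by simpa using hu
  have hwc : w ≠ c := by simpa using hw
  have huw : u ≠ w := by rintro rfl; exact hr (by rfl)
  -- find a fourth vertex
  have h3 : ({u, w, c} : Finset V).card ≤ 3 := by
    apply le_trans (Finset.card_insert_le _ _)
    apply Nat.succ_le_succ
    apply le_trans (Finset.card_insert_le _ _)
    simp
  have : ({u, w, c} : Finset V) ≠ Finset.univ := by
    intro h
    rw [h, Finset.card_univ] at h3
    omega
  obtain ⟨d, hd⟩ : ∃ d, d ∉ ({u, w, c} : Finset V) := by
    by_contra h
    push_neg at h
    exact this (Finset.eq_univ_of_forall h)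
  simp only [Finset.mem_insert, Finset.mem_singleton] at hd
  push_neg at hd
  obtain ⟨hdu, hdw, hdc⟩ := hd
  have hdmem : d ∈ ({c}ᶜ : Set V) := by simpa using hdc
  have hcases : ¬ (G.induce ({c}ᶜ : Set V)).Reachable ⟨d, hdmem⟩ ⟨u, hu⟩ ∨
      ¬ (G.induce ({c}ᶜ : Set V)).Reachable ⟨d, hdmem⟩ ⟨w, hw⟩ := by
    by_contra h
    push_neg at h
    exact hr (h.1.symm.trans h.2)
  have hcard3 : ∀ a b : V, a ≠ b → a ≠ c → b ≠ c → ({a, b, c} : Finset V).card = 3 := by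
    intro a b hab hac hbc
    rw [Finset.card_insert_of_notMem (by simp [hab, hac]),
      Finset.card_insert_of_notMem (by simp [hbc])]
    simp
  rcases hcases with h | h
  · refine ⟨{u, w, c}, {d, u, c}, hcard3 u w huw huc hwc, hcard3 d u hdu hdc huc, ?_,
      ancestor_triple hu hw hr, ancestor_triple hdmem hu h⟩
    intro heq
    have : w ∈ ({d, u, c} : Finset V) := heq ▸ (by simp)
    simp only [Finset.mem_insert, Finset.mem_singleton] at this
    rcases this with h' | h' | h' <;> [exact hdw h'.symm; exact huw h'.symm; exact hwc h']
  · refine ⟨{u, w, c}, {d, w, c}, hcard3 u w huw huc hwc, hcard3 d w hdw hdc hwc, ?_,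
      ancestor_triple hu hw hr, ancestor_triple hdmem hw h⟩
    intro heq
    have : u ∈ ({d, w, c} : Finset V) := heq ▸ (by simp)
    simp only [Finset.mem_insert, Finset.mem_singleton] at this
    rcases this with h' | h' | h' <;> [exact hdu h'.symm; exact huw h'; exact huc h']
end

section
/- In the joint graph G^J obtained from G by attaching a leaf copy to every vertex, a vertex a ∈ V is an ancestor of some star triplet of leaf-copy vertices if and only if a is a uw-separator in G for some pair u, w ∈ V. -/
/-!
A leaf `x^e` of `G^J` has `x` as its only neighbour, so `a` separates `a^e` from every other
leaf. For `u, w ≠ a`, the vertex `a` separates `u^e` from `w^e` in `G^J` exactly when it separates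
`u` from `w` in `G`: a walk of `G` becomes a walk of `G^J` by attaching the two leaves, and a walk
of `G^J` projects to a walk of `G` by sending each leaf to its base vertex. Hence a star triplet
with ancestor `a` contains two vertices other than `a` that `a` separates in `G`, and conversely
such a pair together with `a` itself is a star triplet with ancestor `a`.
-/

variable {V : Type*}

/-- The joint graph `G^J` on `V ⊕ V`: the left copy carries the edges of `G`, and each
left vertex `i` is joined to its right (leaf) copy `i^e`. -/
def jointGraph (G : SimpleGraph V) : SimpleGraph (V ⊕ V) :=
  SimpleGraph.fromRel (fun a b =>
    (∃ i j : V, a = Sum.inl i ∧ b = Sum.inl j ∧ G.Adj i j) ∨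
    (∃ i : V, a = Sum.inl i ∧ b = Sum.inr i))

open SimpleGraph

namespace Separates

variable {G : SimpleGraph V}

theorem iff_forall_walk {v u w : V} : Separates G v u w ↔ ∀ p : G.Walk u w, v ∈ p.support := by
  classical
  exact ⟨fun h p => p.support_bypass_subset_support (h _ p.bypass_isPath), fun h p _ => h p⟩

theorem of_forall_adj_eq {v u w : V} (hu : ∀ x, G.Adj u x → x = v) (huw : u ≠ w) :
    Separates G v u w := by
  rintro (_ | ⟨hadj, _⟩) _
  · exact absurd rfl huw
  · obtain rfl := hu _ hadj
    simp

theorem symm {v u w : V} (h : Separates G v u w) : Separates G v w u := fun p hp => by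
  simpa using h p.reverse hp.reverse

end Separates

namespace jointGraph

variable {G : SimpleGraph V}

@[simp]
theorem adj_inl_inl {i j : V} : (jointGraph G).Adj (.inl i) (.inl j) ↔ G.Adj i j := by
  simpa [jointGraph, G.adj_comm j i] using fun h : G.Adj i j => h.ne

@[simp]
theorem adj_inl_inr {i j : V} : (jointGraph G).Adj (.inl i) (.inr j) ↔ i = j := by
  simp [jointGraph, eq_comm]

@[simp]
theorem adj_inr_inl {i j : V} : (jointGraph G).Adj (.inr i) (.inl j) ↔ i = j := by
  simp [jointGraph]

@[simp]
theorem not_adj_inr_inr {i j : V} : ¬(jointGraph G).Adj (.inr i) (.inr j) := by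
  simp [jointGraph]

variable (G) in
def inlHom : G →g jointGraph G :=
  ⟨Sum.inl, adj_inl_inl.mpr⟩

theorem exists_walk_of_walk {x y : V ⊕ V} (W : (jointGraph G).Walk x y) :
    ∃ q : G.Walk (Sum.elim id id x) (Sum.elim id id y),
      ∀ v ∈ q.support, .inl v ∈ W.support ∨ .inr v = x ∨ .inr v = y := by
  induction W with
  | @nil x => rcases x with i | i <;> exact ⟨.nil, by simp⟩
  | @cons x x' y h W ih =>
    obtain ⟨q, hq⟩ := ih
    rcases x with i | i <;> rcases x' with j | j <;> simp only [adj_inl_inl, adj_inl_inr,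
      adj_inr_inl, not_adj_inr_inr] at h
    · refine ⟨.cons h q, fun v hv => ?_⟩
      rcases List.mem_cons.mp hv with rfl | hv
      · simp
      · rcases hq v hv with hv | hv | hv <;> simp_all
    · subst h
      exact ⟨q, fun v hv => by rcases hq v hv with hv | hv | hv <;> simp_all⟩
    · subst h
      exact ⟨q, fun v hv => by rcases hq v hv with hv | hv | hv <;> simp_all⟩

theorem separates_inr_of_separates {a u w : V} (h : Separates G a u w) (hu : u ≠ a)
    (hw : w ≠ a) : Separates (jointGraph G) (.inl a) (.inr u) (.inr w) := by
  rw [Separates.iff_forall_walk] at h ⊢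
  intro W
  obtain ⟨q, hq⟩ := exists_walk_of_walk W
  rcases hq a (h q) with ha | ha | ha
  · exact ha
  · exact absurd (Sum.inr_injective ha).symm hu
  · exact absurd (Sum.inr_injective ha).symm hw

theorem separates_inr_self {a w : V} (hw : w ≠ a) :
    Separates (jointGraph G) (.inl a) (.inr a) (.inr w) :=
  Separates.of_forall_adj_eq (by rintro (x | x) <;> simp [eq_comm]) (by simpa [eq_comm] using hw)

theorem separates_of_separates_inr {a u w : V}
    (h : Separates (jointGraph G) (.inl a) (.inr u) (.inr w)) : Separates G a u w := by
  rw [Separates.iff_forall_walk] at h ⊢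
  intro q
  have hW := h (.cons (adj_inr_inl.mpr rfl)
    ((q.map (inlHom G)).concat (adj_inl_inr.mpr rfl)))
  simpa [Walk.support_concat, inlHom] using hW

end jointGraph

open jointGraph in
theorem ancestor_in_jointGraph_iff_separator_general (G : SimpleGraph V)
    (a : V) :
    (∃ x y z : V, x ≠ y ∧ x ≠ z ∧ y ≠ z ∧
        Separates (jointGraph G) (Sum.inl a) (Sum.inr x) (Sum.inr y) ∧
        Separates (jointGraph G) (Sum.inl a) (Sum.inr x) (Sum.inr z) ∧
        Separates (jointGraph G) (Sum.inl a) (Sum.inr y) (Sum.inr z)) ↔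
      (∃ u w : V, u ≠ a ∧ w ≠ a ∧ u ≠ w ∧ Separates G a u w) := by
  constructor
  · rintro ⟨x, y, z, hxy, hxz, hyz, hsxy, hsxz, hsyz⟩
    by_cases hx : x = a
    · subst hx
      exact ⟨y, z, hxy.symm, hxz.symm, hyz, separates_of_separates_inr hsyz⟩
    by_cases hy : y = a
    · subst hy
      exact ⟨x, z, hx, hyz.symm, hxz, separates_of_separates_inr hsxz⟩
    exact ⟨x, y, hx, hy, hxy, separates_of_separates_inr hsxy⟩
  · rintro ⟨u, w, hu, hw, huw, h⟩
    exact ⟨u, w, a, huw, hu, hw, separates_inr_of_separates h hu hw,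
      (separates_inr_self hu).symm, (separates_inr_self hw).symm⟩

/-- A vertex `a` of `G` is the ancestor of some star triplet of leaf-copy vertices in
`G^J` iff `a` is a `uw`-separator in `G` for some pair `u, w`. -/
theorem ancestor_in_jointGraph_iff_separator (G : SimpleGraph V) (hG : G.Connected)
    (a : V) :
    (∃ x y z : V, x ≠ y ∧ x ≠ z ∧ y ≠ z ∧
        Separates (jointGraph G) (Sum.inl a) (Sum.inr x) (Sum.inr y) ∧
        Separates (jointGraph G) (Sum.inl a) (Sum.inr x) (Sum.inr z) ∧
        Separates (jointGraph G) (Sum.inl a) (Sum.inr y) (Sum.inr z)) ↔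
      (∃ u w : V, u ≠ a ∧ w ≠ a ∧ u ≠ w ∧ Separates G a u w) :=
  ancestor_in_jointGraph_iff_separator_general G a
end
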